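/- When the two states are equal, W_L = W_R = W with h > 0 and D = P11 P22 − P12^2 > 0, the two-point entropy conservative flux F̃^x (with the logarithmic means evaluated by the convention a^ln = a at equal arguments) equals the exact flux F^x(W) = (h v1, h(v1^2 + P11), h(v1 v2 + P12), (h/2) v1 (v1^2 + 3 P11), (h/2)(v1^2 v2 + 2 v1 P12 + v2 P11), (h/2)(v1 v2^2 + 2 v2 P12 + v1 P22)); that is, the flux F̃^x is consistent. -/

import Mathlib

open Matrix

/-- Logarithmic mean, with the convention `logMean a a = a`. -/
noncomputable def logMean (a b : ℝ) : ℝ :=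
  if a = b then a else (b - a) / (Real.log b - Real.log a)

/-- The two-point entropy conservative flux `F̃^x` of the SSW model of
Chandrashekar et al., built from arithmetic and logarithmic means. -/
noncomputable def ecFluxX (hL v1L v2L P11L P12L P22L hR v1R v2R P11R P12R P22R : ℝ) :
    Fin 6 → ℝ :=
  let DL := P11L * P22L - P12L ^ 2
  let DR := P11R * P22R - P12R ^ 2
  let b11L := P11L / DL; let b12L := P12L / DL; let b22L := P22L / DL
  let b11R := P11R / DR; let b12R := P12R / DR; let b22R := P22R / DR
  let DbL := b11L * b22L - b12L ^ 2
  let DbR := b11R * b22R - b12R ^ 2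
  let b11 := (b11L + b11R) / 2; let b12 := (b12L + b12R) / 2; let b22 := (b22L + b22R) / 2
  let hbar := (hL + hR) / 2
  let v1bar := (v1L + v1R) / 2; let v2bar := (v2L + v2R) / 2
  let den := b11 * b22 - b12 ^ 2
  let f1 := logMean hL hR * v1bar
  let f2 := v1bar * f1 + hbar * b11 / den
  let f3 := v2bar * f1 + hbar * b12 / den
  let f4 := 1 / 2 * (b11 / logMean DbL DbR - (v1L ^ 2 + v1R ^ 2) / 2) * f1 + v1bar * f2
  let f5 := 1 / 2 * ((b12 / logMean DbL DbR - (v1L * v2L + v1R * v2R) / 2) * f1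
    + v1bar * f3 + v2bar * f2)
  let f6 := 1 / 2 * (b22 / logMean DbL DbR - (v2L ^ 2 + v2R ^ 2) / 2) * f1 + v2bar * f3
  ![f1, f2, f3, f4, f5, f6]

/-- Consistency of the two-point entropy conservative flux: when the two states coincide,
`F̃^x(W, W)` equals the exact flux `F^x(W)`. -/
theorem ssw_ecFlux_consistent (h v1 v2 P11 P12 P22 : ℝ)
    (hh : 0 < h) (hD : 0 < P11 * P22 - P12 ^ 2) :
    ecFluxX h v1 v2 P11 P12 P22 h v1 v2 P11 P12 P22
      = ![h * v1, h * (v1 ^ 2 + P11), h * (v1 * v2 + P12),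
          h / 2 * (v1 * (v1 ^ 2 + 3 * P11)),
          h / 2 * (v1 ^ 2 * v2 + 2 * v1 * P12 + v2 * P11),
          h / 2 * (v1 * v2 ^ 2 + 2 * v2 * P12 + v1 * P22)] := by
  have hDne : (P11 * P22 - P12 ^ 2) ≠ 0 := hD.ne'
  have hDne' : (P22 * P11 - P12 ^ 2) ≠ 0 := by rw [mul_comm]; exact hDne
  have harith : ∀ a : ℝ, (a + a) / 2 = a := fun a => by ring
  have hkey : P11 / (P11 * P22 - P12 ^ 2) * (P22 / (P11 * P22 - P12 ^ 2))
      - (P12 / (P11 * P22 - P12 ^ 2)) ^ 2 = 1 / (P11 * P22 - P12 ^ 2) := by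
    field_simp
  simp only [ecFluxX, logMean, if_pos rfl, if_true, harith, hkey, div_div_eq_mul_div]
  funext i
  fin_cases i <;>
    simp only [Matrix.cons_val_zero, Matrix.cons_val_one, Matrix.head_cons, Fin.isValue,
      Matrix.cons_val_two, Matrix.tail_cons, Matrix.cons_val_three, Matrix.cons_val_four,
      Matrix.cons_val_fin_one, Matrix.cons_val', Fin.reduceFinMk, Matrix.cons_val] <;>
    field_simp <;> ring
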